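/- With R = ℤ/pℤ[t,t⁻¹] (p > 1) and B = [[-t⁻¹,1,0],[0,1,0],[0,1,-t]]: for every v ∈ X₂ (all coordinates nonzero of equal lowest degree) and every n ≥ 2, the vector Bⁿv lies in X₁ (ping-pong inclusion BⁿX₂ ⊆ X₁ for n ≥ 2). -/

import Mathlib

/-
Only the orders of the coordinates matter. If `ord w₀ = M` and `ord w₁, ord w₂ ≥ N` with `M ≤ N`,
then `B w = (-t⁻¹ w₀ + w₁, w₁, w₁ - t w₂)` has `ord = M - 1` exactly in the first coordinate,
since `-t⁻¹ w₀` has its leading term there and `w₁` cannot cancel it, while the other two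
coordinates still have `ord ≥ N`. Starting from `v ∈ X₂` (orders all equal to `N`), `Bⁿ v` thus
has first coordinate of order exactly `N - n` and the others of order `≥ N ≥ (N - n) + 2`.
-/

open LaurentPolynomial

/-- lowest degree of `f` is at least `n` (ord 0 = +∞). -/
def ordGE {R : Type*} [CommRing R] (f : LaurentPolynomial R) (n : ℤ) : Prop :=
  ∀ m : ℤ, m < n → f.coeff m = 0

/-- lowest degree of `f` is exactly `n`. -/
def ordEq {R : Type*} [CommRing R] (f : LaurentPolynomial R) (n : ℤ) : Prop :=
  f.coeff n ≠ 0 ∧ ordGE f n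

noncomputable def Bm (p : ℕ) : Matrix (Fin 3) (Fin 3) (LaurentPolynomial (ZMod p)) :=
  !![-T (-1), 1, 0;
     0, 1, 0;
     0, 1, -T 1]

section Order

variable {R : Type*} [CommRing R] {f g : R[T;T⁻¹]} {n n' : ℤ}

lemma coeff_T_mul (k m : ℤ) (f : R[T;T⁻¹]) : (T k * f).coeff m = f.coeff (m - k) := by
  rw [show (T k : R[T;T⁻¹]) = AddMonoidAlgebra.single k 1 from rfl,
    AddMonoidAlgebra.coeff_single_mul_apply, one_mul, neg_add_eq_sub]

lemma ordGE.mono (hf : ordGE f n) (h : n' ≤ n) : ordGE f n' :=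
  fun m hm => hf m (hm.trans_le h)

lemma ordGE.add (hf : ordGE f n) (hg : ordGE g n) : ordGE (f + g) n := fun m hm => by
  rw [AddMonoidAlgebra.coeff_add, Finsupp.add_apply, hf m hm, hg m hm, add_zero]

lemma ordGE.sub (hf : ordGE f n) (hg : ordGE g n) : ordGE (f - g) n := fun m hm => by
  rw [AddMonoidAlgebra.coeff_sub, Finsupp.sub_apply, hf m hm, hg m hm, sub_zero]

lemma ordGE.T_mul (hf : ordGE f n) (k : ℤ) : ordGE (T k * f) (n + k) := fun m hm => by
  rw [coeff_T_mul]
  exact hf _ (by linarith)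

lemma ordEq.neg (hf : ordEq f n) : ordEq (-f) n :=
  ⟨by rw [AddMonoidAlgebra.coeff_neg, Finsupp.neg_apply, neg_ne_zero]; exact hf.1,
    fun m hm => by rw [AddMonoidAlgebra.coeff_neg, Finsupp.neg_apply, hf.2 m hm, neg_zero]⟩

lemma ordEq.T_mul (hf : ordEq f n) (k : ℤ) : ordEq (T k * f) (n + k) :=
  ⟨by rw [coeff_T_mul, add_sub_cancel_right]; exact hf.1, hf.2.T_mul k⟩

lemma ordEq.add_of_ordGE (hf : ordEq f n) (hg : ordGE g (n + 1)) : ordEq (f + g) n :=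
  ⟨by rw [AddMonoidAlgebra.coeff_add, Finsupp.add_apply, hg n (by linarith), add_zero]; exact hf.1,
    hf.2.add (hg.mono (by linarith))⟩

end Order

section Orbit

variable {p : ℕ}

lemma Bm_mulVec (w : Fin 3 → LaurentPolynomial (ZMod p)) :
    (Bm p).mulVec w = ![-(T (-1) * w 0) + w 1, w 1, w 1 - T 1 * w 2] := by
  ext i
  fin_cases i <;> simp [Bm, Matrix.mulVec, dotProduct, Fin.sum_univ_three, sub_eq_add_neg]

lemma ord_Bm_mulVec {w : Fin 3 → LaurentPolynomial (ZMod p)} {M N : ℤ} (hMN : M ≤ N)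
    (h0 : ordEq (w 0) M) (h1 : ordGE (w 1) N) (h2 : ordGE (w 2) N) :
    ordEq ((Bm p).mulVec w 0) (M - 1) ∧ ordGE ((Bm p).mulVec w 1) N ∧
      ordGE ((Bm p).mulVec w 2) N := by
  simp only [Bm_mulVec, Matrix.cons_val_zero, Matrix.cons_val_one, Matrix.cons_val_two,
    Matrix.head_cons, Matrix.tail_cons]
  refine ⟨?_, h1, h1.sub ((h2.T_mul 1).mono (by linarith))⟩
  rw [sub_eq_add_neg]
  exact (h0.T_mul (-1)).neg.add_of_ordGE (h1.mono (by linarith))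

lemma ord_Bm_pow_mulVec {v : Fin 3 → LaurentPolynomial (ZMod p)} {N : ℤ}
    (h0 : ordEq (v 0) N) (h1 : ordGE (v 1) N) (h2 : ordGE (v 2) N) (n : ℕ) :
    ordEq (((Bm p) ^ n).mulVec v 0) (N - n) ∧ ordGE (((Bm p) ^ n).mulVec v 1) N ∧
      ordGE (((Bm p) ^ n).mulVec v 2) N := by
  induction n with
  | zero => simpa using ⟨h0, h1, h2⟩
  | succ n ih =>
    rw [pow_succ', ← Matrix.mulVec_mulVec, Nat.cast_succ, ← sub_sub]
    obtain ⟨ih0, ih1, ih2⟩ := ih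
    exact ord_Bm_mulVec (by omega : N - n ≤ N) ih0 ih1 ih2

end Orbit

theorem Bpow_X2_subset_X1_general (p : ℕ)
    (v : Fin 3 → LaurentPolynomial (ZMod p)) (N : ℤ)
    (h0 : ordEq (v 0) N) (h1 : ordEq (v 1) N) (h2 : ordEq (v 2) N)
    (n : ℕ) (hn : 2 ≤ n) :
    ∃ m : ℤ, ordEq (((Bm p) ^ n).mulVec v 0) m ∧
      ordGE (((Bm p) ^ n).mulVec v 1) (m + 2) ∧
      ordGE (((Bm p) ^ n).mulVec v 2) (m + 2) := by
  obtain ⟨H0, H1, H2⟩ := ord_Bm_pow_mulVec h0 h1.2 h2.2 n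
  have h2n : (2 : ℤ) ≤ n := by exact_mod_cast hn
  exact ⟨N - n, H0, H1.mono (by linarith), H2.mono (by linarith)⟩

/-- Ping-pong inclusion: Bⁿ X₂ ⊆ X₁ for n ≥ 2. -/
theorem Bpow_X2_subset_X1 (p : ℕ) [Fact (1 < p)]
    (v : Fin 3 → LaurentPolynomial (ZMod p)) (N : ℤ)
    (h0 : ordEq (v 0) N) (h1 : ordEq (v 1) N) (h2 : ordEq (v 2) N)
    (n : ℕ) (hn : 2 ≤ n) :
    ∃ m : ℤ, ordEq (((Bm p) ^ n).mulVec v 0) m ∧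
      ordGE (((Bm p) ^ n).mulVec v 1) (m + 2) ∧
      ordGE (((Bm p) ^ n).mulVec v 2) (m + 2) :=
  Bpow_X2_subset_X1_general p v N h0 h1 h2 n hn
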